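/- Let Γ be a complete set of representatives of the isomorphism classes of finitely presented left R-modules, and let PI = ∏_{S∈Γ} S⁺ be the product of their character modules. Then PI is a pi-indigent right R-module: its subinjectivity domain consists exactly of the absolutely pure right R-modules. -/

import Mathlib

universe u

open LinearMap MulOpposite

/-! Character module -/

/-- The character group `M⁺ = Hom_ℤ(M, ℚ/ℤ)`. -/
abbrev CharMod (M : Type u) [AddCommGroup M] : Type u := M →+ AddCircle (1 : ℚ)

/-- If `M` is a left `S`-module, then `M⁺` is a right `S`-module via `(f • r) m = f (r • m)`. -/
instance CharMod.moduleRight (S : Type u) [Ring S] (M : Type u) [AddCommGroup M]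
    [Module S M] : Module Sᵐᵒᵖ (CharMod M) where
  smul r f := f.comp (DistribMulAction.toAddMonoidHom M (unop r))
  one_smul f := by
    apply AddMonoidHom.ext; intro m
    show f ((unop (1 : Sᵐᵒᵖ)) • m) = f m
    simp
  mul_smul r s f := by
    apply AddMonoidHom.ext; intro m
    show f ((unop (r * s)) • m) = f ((unop s) • ((unop r) • m))
    simp [mul_smul]
  smul_zero r := by apply AddMonoidHom.ext; intro m; rfl
  smul_add r f g := by apply AddMonoidHom.ext; intro m; rfl
  add_smul r s f := by
    apply AddMonoidHom.ext; intro m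
    show f ((unop (r + s)) • m) = f ((unop r) • m) + f ((unop s) • m)
    rw [unop_add, add_smul, map_add]
  zero_smul f := by
    apply AddMonoidHom.ext; intro m
    show f ((unop (0 : Sᵐᵒᵖ)) • m) = 0
    simp

/-- If `M` is a right `S`-module, then `M⁺` is a left `S`-module via `(r • f) m = f (m • r)`. -/
instance CharMod.moduleLeft (S : Type u) [Ring S] (M : Type u) [AddCommGroup M]
    [Module Sᵐᵒᵖ M] : Module S (CharMod M) where
  smul r f := f.comp (DistribMulAction.toAddMonoidHom M (op r))
  one_smul f := by
    apply AddMonoidHom.ext; intro m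
    show f ((op (1 : S)) • m) = f m
    simp
  mul_smul r s f := by
    apply AddMonoidHom.ext; intro m
    show f ((op (r * s)) • m) = f ((op s) • ((op r) • m))
    rw [← mul_smul, ← op_mul]
  smul_zero r := by apply AddMonoidHom.ext; intro m; rfl
  smul_add r f g := by apply AddMonoidHom.ext; intro m; rfl
  add_smul r s f := by
    apply AddMonoidHom.ext; intro m
    show f ((op (r + s)) • m) = f ((op r) • m) + f ((op s) • m)
    rw [op_add, add_smul, map_add]
  zero_smul f := by
    apply AddMonoidHom.ext; intro m
    show f ((op (0 : S)) • m) = 0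
    simp

/-! Tensor product of a right module and a left module over a (possibly noncommutative) ring -/

section Tensor

variable (S : Type u) [Ring S]

/-- The bilinearity relations defining `M ⊗_S N` as a quotient of `M ⊗_ℤ N`. -/
def tensorRel (M N : Type u) [AddCommGroup M] [Module Sᵐᵒᵖ M] [AddCommGroup N] [Module S N] :
    Submodule ℤ (TensorProduct ℤ M N) :=
  Submodule.span ℤ {x | ∃ (m : M) (r : S) (n : N),
    x = (op r • m) ⊗ₜ[ℤ] n - m ⊗ₜ[ℤ] (r • n)}

/-- `M ⊗_S N` for a right `S`-module `M` and a left `S`-module `N`. -/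
def RTensor (M N : Type u) [AddCommGroup M] [Module Sᵐᵒᵖ M] [AddCommGroup N] [Module S N] :
    Type u := TensorProduct ℤ M N ⧸ tensorRel S M N

noncomputable instance (M N : Type u) [AddCommGroup M] [Module Sᵐᵒᵖ M] [AddCommGroup N] [Module S N] :
    AddCommGroup (RTensor S M N) :=
  inferInstanceAs (AddCommGroup (TensorProduct ℤ M N ⧸ tensorRel S M N))

/-- Functoriality of `M ⊗_S -` in the left-module variable. -/
noncomputable def rTensorMap (M : Type u) [AddCommGroup M] [Module Sᵐᵒᵖ M] {N B : Type u}
    [AddCommGroup N] [Module S N] [AddCommGroup B] [Module S B] (g : N →ₗ[S] B) :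
    RTensor S M N →ₗ[ℤ] RTensor S M B :=
  Submodule.mapQ _ _ (TensorProduct.map LinearMap.id g.toAddMonoidHom.toIntLinearMap)
    (by
      rw [tensorRel, Submodule.span_le]
      rintro x ⟨m, r, n, rfl⟩
      change TensorProduct.map LinearMap.id g.toAddMonoidHom.toIntLinearMap _ ∈ tensorRel S M B
      rw [map_sub, TensorProduct.map_tmul, TensorProduct.map_tmul]
      simp only [LinearMap.id_apply, AddMonoidHom.coe_toIntLinearMap, LinearMap.toAddMonoidHom_coe]
      rw [map_smul]
      exact Submodule.subset_span ⟨m, r, g n, rfl⟩)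

/-- Functoriality of `- ⊗_S N` in the right-module variable. -/
noncomputable def lTensorMap {M B : Type u} [AddCommGroup M] [Module Sᵐᵒᵖ M] [AddCommGroup B]
    [Module Sᵐᵒᵖ B] (h : M →ₗ[Sᵐᵒᵖ] B) (N : Type u) [AddCommGroup N] [Module S N] :
    RTensor S M N →ₗ[ℤ] RTensor S B N :=
  Submodule.mapQ _ _ (TensorProduct.map h.toAddMonoidHom.toIntLinearMap LinearMap.id)
    (by
      rw [tensorRel, Submodule.span_le]
      rintro x ⟨m, r, n, rfl⟩
      change TensorProduct.map h.toAddMonoidHom.toIntLinearMap LinearMap.id _ ∈ tensorRel S B N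
      rw [map_sub, TensorProduct.map_tmul, TensorProduct.map_tmul]
      simp only [LinearMap.id_apply, AddMonoidHom.coe_toIntLinearMap, LinearMap.toAddMonoidHom_coe]
      rw [map_smul]
      exact Submodule.subset_span ⟨h m, r, n, rfl⟩)

end Tensor

/-! Basic relative homological notions -/

section Defs

variable (S : Type u) [Ring S]

/-- `M` is `N`-subinjective: every map `N → M` extends along every embedding of `N`. -/
def Subinjective (N M : Type u) [AddCommGroup N] [Module S N] [AddCommGroup M]
    [Module S M] : Prop :=
  ∀ (K : Type u) [AddCommGroup K] [Module S K] (i : N →ₗ[S] K), Function.Injective i →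
    ∀ f : N →ₗ[S] M, ∃ h : K →ₗ[S] M, h ∘ₗ i = f

/-- `M` is an injective module. -/
def InjMod (M : Type u) [AddCommGroup M] [Module S M] : Prop :=
  ∀ (N : Type u) [AddCommGroup N] [Module S N], Subinjective S N M

/-- `M` is `N`-subprojective. -/
def Subprojective (M N : Type u) [AddCommGroup M] [Module S M] [AddCommGroup N]
    [Module S N] : Prop :=
  ∀ (B : Type u) [AddCommGroup B] [Module S B] (g : B →ₗ[S] N), Function.Surjective g →
    ∀ f : M →ₗ[S] N, ∃ h : M →ₗ[S] B, g ∘ₗ h = f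

/-- A monomorphism of left `S`-modules is pure if it stays injective after
tensoring with any right `S`-module. -/
def IsPureMono {A B : Type u} [AddCommGroup A] [Module S A] [AddCommGroup B] [Module S B]
    (i : A →ₗ[S] B) : Prop :=
  Function.Injective i ∧
    ∀ (M : Type u) [AddCommGroup M] [Module Sᵐᵒᵖ M], Function.Injective (rTensorMap S M i)

/-- `N` is absolutely pure (fp-injective): every embedding of `N` is pure. -/
def AbsPure (N : Type u) [AddCommGroup N] [Module S N] : Prop :=
  ∀ (K : Type u) [AddCommGroup K] [Module S K] (i : N →ₗ[S] K), Function.Injective i →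
    IsPureMono S i

/-- `N` is absolutely `M`-pure, for a right module `M`. -/
def AbsMPure (M : Type u) [AddCommGroup M] [Module Sᵐᵒᵖ M] (N : Type u) [AddCommGroup N]
    [Module S N] : Prop :=
  ∀ (B : Type u) [AddCommGroup B] [Module S B] (i : N →ₗ[S] B), Function.Injective i →
    Function.Injective (rTensorMap S M i)

/-- `M` is pure-injective: maps into `M` extend along pure monomorphisms. -/
def PureInjective (M : Type u) [AddCommGroup M] [Module S M] : Prop :=
  ∀ (A B : Type u) [AddCommGroup A] [Module S A] [AddCommGroup B] [Module S B]
    (i : A →ₗ[S] B), IsPureMono S i → ∀ f : A →ₗ[S] M, ∃ h : B →ₗ[S] M, h ∘ₗ i = f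

/-- `M` is indigent: its subinjectivity domain is exactly the injective modules. -/
def Indigent (M : Type u) [AddCommGroup M] [Module S M] : Prop :=
  ∀ (N : Type u) [AddCommGroup N] [Module S N], Subinjective S N M ↔ InjMod S N

/-- `M` is pi-indigent: `M` is pure-injective and its subinjectivity domain is exactly
the absolutely pure modules. -/
def PiIndigent (M : Type u) [AddCommGroup M] [Module S M] : Prop :=
  PureInjective S M ∧
    ∀ (N : Type u) [AddCommGroup N] [Module S N], Subinjective S N M ↔ AbsPure S N

/-- Flatness via the equational criterion. -/
def FlatMod (M : Type u) [AddCommGroup M] [Module S M] : Prop :=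
  ∀ (n : ℕ) (r : Fin n → S) (x : Fin n → M), (∑ i, r i • x i) = 0 →
    ∃ (m : ℕ) (a : Fin n → Fin m → S) (y : Fin m → M),
      (∀ i, x i = ∑ j, a i j • y j) ∧ ∀ j, (∑ i, r i * a i j) = 0

/-- Finitely presented module. -/
def FPMod (M : Type u) [AddCommGroup M] [Module S M] : Prop :=
  ∃ (n : ℕ) (K : Submodule S (Fin n → S)), K.FG ∧
    Nonempty ((((Fin n → S)) ⧸ K) ≃ₗ[S] M)

/-- `Ext¹_S(M, N) = 0`, expressed by the splitting of every extension of `N` by `M`. -/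
def ExtVanish (M N : Type u) [AddCommGroup M] [Module S M] [AddCommGroup N] [Module S N] :
    Prop :=
  ∀ (B : Type u) [AddCommGroup B] [Module S B] (i : N →ₗ[S] B) (p : B →ₗ[S] M),
    Function.Injective i → Function.Surjective p → LinearMap.range i = LinearMap.ker p →
      ∃ s : M →ₗ[S] B, p ∘ₗ s = LinearMap.id

/-- `Tor₁^S(N, T) = 0` for a right module `N` and a left module `T`. -/
def TorVanish (N : Type u) [AddCommGroup N] [Module Sᵐᵒᵖ N] (T : Type u) [AddCommGroup T]
    [Module S T] : Prop :=
  ∀ (P K : Type u) [AddCommGroup P] [Module Sᵐᵒᵖ P] [AddCommGroup K] [Module Sᵐᵒᵖ K]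
    (i : K →ₗ[Sᵐᵒᵖ] P) (p : P →ₗ[Sᵐᵒᵖ] N), Module.Projective Sᵐᵒᵖ P →
      Function.Injective i → Function.Surjective p →
        LinearMap.range i = LinearMap.ker p → Function.Injective (lTensorMap S i T)

/-- `M` is a Whitehead test module for injectivity (i-test). -/
def ITest (M : Type u) [AddCommGroup M] [Module S M] : Prop :=
  ∀ (N : Type u) [AddCommGroup N] [Module S N], ExtVanish S M N → InjMod S N

/-- `S` is (left) n-saturated: `S` is not semisimple and every finitely generated
non-projective module is i-test. -/
def NSaturated : Prop :=
  ¬ IsSemisimpleRing S ∧ ∀ (M : Type u) [AddCommGroup M] [Module S M],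
    Module.Finite S M → ¬ Module.Projective S M → ITest S M

/-- A submodule is essential if it intersects every nonzero submodule nontrivially. -/
def EssentialIn {M : Type u} [AddCommGroup M] [Module S M] (A : Submodule S M) : Prop :=
  ∀ B : Submodule S M, B ≠ ⊥ → A ⊓ B ≠ ⊥

/-- `M` is a singular module: every element is annihilated by an essential left ideal. -/
def SingularMod (M : Type u) [AddCommGroup M] [Module S M] : Prop :=
  ∀ x : M, EssentialIn S (LinearMap.ker (LinearMap.toSpanSingleton S M x))

/-- `S` is (left) nonsingular: `Z(S) = 0`. -/
def NonsingularRing : Prop :=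
  ∀ r : S, EssentialIn S (LinearMap.ker (LinearMap.toSpanSingleton S S r)) → r = 0

/-- The socle of a module: the supremum of its simple submodules. -/
def socle (M : Type u) [AddCommGroup M] [Module S M] : Submodule S M :=
  sSup {N : Submodule S M | IsAtom N}

/-- von Neumann regular ring. -/
def IsVNR : Prop := ∀ a : S, ∃ r : S, a * r * a = a

/-- (left) V-ring: every simple module is injective. -/
def VRing : Prop :=
  ∀ (M : Type u) [AddCommGroup M] [Module S M], IsSimpleModule S M → InjMod S M

/-- (left) hereditary: every left ideal is projective. -/
def HereditaryRing : Prop := ∀ I : Submodule S S, Module.Projective S I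

/-- (left) semihereditary: every finitely generated left ideal is projective. -/
def SemihereditaryRing : Prop := ∀ I : Submodule S S, I.FG → Module.Projective S I

/-- (left) SI-ring: every singular module is injective. -/
def SIRing : Prop :=
  ∀ (M : Type u) [AddCommGroup M] [Module S M], SingularMod S M → InjMod S M

/-- quasi-Frobenius ring: two-sided Noetherian and self-injective. -/
def QFRing : Prop :=
  IsNoetherianRing S ∧ IsNoetherianRing Sᵐᵒᵖ ∧ InjMod S S ∧ InjMod Sᵐᵒᵖ S

/-- A module is uniserial if its submodules are totally ordered. -/
def Uniserial (M : Type u) [AddCommGroup M] [Module S M] : Prop :=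
  ∀ A B : Submodule S M, A ≤ B ∨ B ≤ A

/-- (left) serial ring: `S` is a finite direct sum of uniserial left ideals. -/
def SerialRing : Prop :=
  ∃ (n : ℕ) (f : Fin n → Submodule S S), (∀ i, Uniserial S (f i)) ∧
    iSupIndep f ∧ iSup f = ⊤

/-- (left) coherent: every finitely generated left ideal is finitely presented. -/
def CoherentRing : Prop := ∀ I : Submodule S S, I.FG → FPMod S I

/-- Indecomposable ring: no nontrivial central idempotents. -/
def IndecompRing : Prop :=
  Nontrivial S ∧ ∀ e : S, e * e = e → (∀ r : S, e * r = r * e) → e = 0 ∨ e = 1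

end Defs

/-!
`Hom_R(A, W⁺) ≅ (W ⊗_R A)⁺` and `ℚ/ℤ` is an injective cogenerator, so a map `i : A → B` has
the property that every `A → W⁺` extends along it exactly when `W ⊗ i` is injective. Hence
character modules, and their product `PI`, are pure-injective, and every absolutely pure module
is `PI`-subinjective.

Conversely let `N` be `PI`-subinjective and `i : N → K` an embedding. Every finitely presented
`F` is isomorphic to some `Γ j`, so `F⁺` is a retract of `PI` and maps `N → F⁺` extend along `i`;
by duality `F ⊗ i` is injective. For an arbitrary `M`, an element of `M ⊗ N` killed by `M ⊗ i`
comes from an element of `F ⊗ N` killed by `F ⊗ i`, where `F → M` is finitely presented: write the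
element via a free module `P → M`, use right exactness of `⊗` to see that its image in `P ⊗ K`
involves only finitely many relations of `M`, and let `F` be the module defined by these
relations. So `M ⊗ i` is injective and `N` is absolutely pure.
-/

namespace RTensor

variable (S : Type u) [Ring S] {M : Type u} [AddCommGroup M] [Module Sᵐᵒᵖ M]
  {N : Type u} [AddCommGroup N] [Module S N]

noncomputable def mk : TensorProduct ℤ M N →+ RTensor S M N :=
  (tensorRel S M N).mkQ.toAddMonoidHom

noncomputable def tmul (m : M) (n : N) : RTensor S M N := mk S (m ⊗ₜ[ℤ] n)

theorem mk_surjective : Function.Surjective (mk S (M := M) (N := N)) :=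
  Submodule.mkQ_surjective _

theorem mk_eq_zero_iff {w : TensorProduct ℤ M N} : mk S w = 0 ↔ w ∈ tensorRel S M N :=
  Submodule.Quotient.mk_eq_zero _

theorem op_smul_tmul (r : S) (m : M) (n : N) : tmul S (op r • m) n = tmul S m (r • n) := by
  rw [tmul, tmul, ← sub_eq_zero, ← map_sub, mk_eq_zero_iff]
  exact Submodule.subset_span ⟨m, r, n, rfl⟩

theorem add_tmul (m m' : M) (n : N) : tmul S (m + m') n = tmul S m n + tmul S m' n := by
  rw [tmul, TensorProduct.add_tmul, map_add]; rfl

theorem tmul_add (m : M) (n n' : N) : tmul S m (n + n') = tmul S m n + tmul S m n' := by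
  rw [tmul, TensorProduct.tmul_add, map_add]; rfl

theorem zero_tmul (n : N) : tmul S (0 : M) n = 0 := by
  rw [tmul, TensorProduct.zero_tmul, map_zero]

@[elab_as_elim]
theorem induction_on {motive : RTensor S M N → Prop} (x : RTensor S M N) (zero : motive 0)
    (tmul : ∀ m n, motive (tmul S m n)) (add : ∀ x y, motive x → motive y → motive (x + y)) :
    motive x := by
  obtain ⟨w, rfl⟩ := mk_surjective S x
  induction w using TensorProduct.induction_on with
  | zero => rwa [map_zero]
  | tmul m n => exact tmul m n
  | add a b ha hb => rw [map_add]; exact add _ _ ha hb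

theorem exists_finset (x : RTensor S M N) :
    ∃ s : Finset (M × N), x = ∑ a ∈ s, tmul S a.1 a.2 := by
  obtain ⟨w, rfl⟩ := mk_surjective S x
  obtain ⟨s, rfl⟩ := TensorProduct.exists_finset w
  exact ⟨s, map_sum _ _ _⟩

theorem addHom_ext {A : Type*} [AddCommMonoid A] {f g : RTensor S M N →+ A}
    (h : ∀ m n, f (tmul S m n) = g (tmul S m n)) : f = g := by
  ext x
  induction x using induction_on S with
  | zero => simp only [map_zero]
  | tmul m n => exact h m n
  | add x y hx hy => rw [map_add, map_add, hx, hy]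

theorem tensorRel_le_ker_lift {A : Type*} [AddCommGroup A] (f : M →ₗ[ℤ] N →ₗ[ℤ] A)
    (hf : ∀ (r : S) m n, f (op r • m) n = f m (r • n)) :
    tensorRel S M N ≤ LinearMap.ker (TensorProduct.lift f) := by
  refine Submodule.span_le.2 ?_
  rintro _ ⟨m, r, n, rfl⟩
  exact LinearMap.mem_ker.2 <| by
    rw [map_sub, TensorProduct.lift.tmul, TensorProduct.lift.tmul, hf, sub_self]

noncomputable def lift {A : Type*} [AddCommGroup A] (f : M →ₗ[ℤ] N →ₗ[ℤ] A)
    (hf : ∀ (r : S) m n, f (op r • m) n = f m (r • n)) : RTensor S M N →+ A :=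
  ((tensorRel S M N).liftQ _ (tensorRel_le_ker_lift S f hf)).toAddMonoidHom

theorem rTensorMap_tmul {B : Type u} [AddCommGroup B] [Module S B] (g : N →ₗ[S] B)
    (m : M) (n : N) : rTensorMap S M g (tmul S m n) = tmul S m (g n) := rfl

theorem lTensorMap_tmul {B : Type u} [AddCommGroup B] [Module Sᵐᵒᵖ B] (h : M →ₗ[Sᵐᵒᵖ] B)
    (m : M) (n : N) : lTensorMap S h N (tmul S m n) = tmul S (h m) n := rfl

theorem lTensorMap_rTensorMap {B K : Type u} [AddCommGroup B] [Module Sᵐᵒᵖ B] [AddCommGroup K]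
    [Module S K] (h : M →ₗ[Sᵐᵒᵖ] B) (g : N →ₗ[S] K) (x : RTensor S M N) :
    lTensorMap S h K (rTensorMap S M g x) = rTensorMap S B g (lTensorMap S h N x) := by
  induction x using induction_on S with
  | zero => simp only [map_zero]
  | tmul m n => rfl
  | add x y hx hy => rw [map_add, map_add, map_add, map_add, hx, hy]

section RightExact

variable {P : Type u} [AddCommGroup P] [Module Sᵐᵒᵖ P]

theorem tensorRel_le_map {p : P →ₗ[Sᵐᵒᵖ] M} (hp : Function.Surjective p) :
    tensorRel S M N ≤ (tensorRel S P N).map (p.toAddMonoidHom.toIntLinearMap.rTensor N) := by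
  refine Submodule.span_le.2 ?_
  rintro _ ⟨m, r, n, rfl⟩
  obtain ⟨a, rfl⟩ := hp m
  refine ⟨(op r • a) ⊗ₜ[ℤ] n - a ⊗ₜ[ℤ] (r • n), Submodule.subset_span ⟨a, r, n, rfl⟩, ?_⟩
  simp

theorem exists_finset_of_lTensorMap_eq_zero {p : P →ₗ[Sᵐᵒᵖ] M} (hp : Function.Surjective p)
    (u : RTensor S P N) (hu : lTensorMap S p N u = 0) :
    ∃ s : Finset (P × N), (∀ a ∈ s, p a.1 = 0) ∧ u = ∑ a ∈ s, tmul S a.1 a.2 := by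
  classical
  obtain ⟨w, rfl⟩ := mk_surjective S u
  obtain ⟨w', hw'rel, hw'⟩ := tensorRel_le_map S hp ((mk_eq_zero_iff S).1 hu)
  obtain ⟨t, ht⟩ := (rTensor_exact N
    (LinearMap.exact_subtype_ker_map p.toAddMonoidHom.toIntLinearMap) hp (w - w')).1
    (by rw [map_sub]; exact sub_eq_zero.2 hw'.symm)
  obtain ⟨s, rfl⟩ := TensorProduct.exists_finset t
  have hmk : mk S w = mk S (w - w') := by
    rw [map_sub, (mk_eq_zero_iff S).2 hw'rel, sub_zero]
  refine ⟨s.image fun a => ((a.1 : P), a.2), ?_, ?_⟩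
  · simp only [Finset.mem_image]
    rintro _ ⟨a, -, rfl⟩
    exact a.1.2
  · rw [hmk, ← ht, map_sum, map_sum, Finset.sum_image]
    · rfl
    · intro a _ b _ h
      simp only [Prod.mk.injEq] at h
      exact Prod.ext (Subtype.ext h.1) h.2

end RightExact

noncomputable def toChar (f : N →ₗ[S] CharMod M) : CharMod (RTensor S M N) :=
  lift S (LinearMap.mk₂ ℤ (fun m n => f n m) (fun _ _ _ => map_add _ _ _)
      (fun _ _ _ => map_zsmul _ _ _) (fun _ _ _ => by rw [map_add]; rfl)
      (fun _ _ _ => by rw [map_zsmul]; rfl))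
    fun r m n => by
      show f n (op r • m) = f (r • n) m
      rw [f.map_smul]; rfl

theorem toChar_tmul (f : N →ₗ[S] CharMod M) (m : M) (n : N) :
    toChar S f (tmul S m n) = f n m := rfl

noncomputable def ofChar (χ : CharMod (RTensor S M N)) : N →ₗ[S] CharMod M where
  toFun n := AddMonoidHom.mk' (fun m => χ (tmul S m n)) fun m m' => by rw [add_tmul, map_add]
  map_add' n n' := AddMonoidHom.ext fun m => by
    show χ (tmul S m (n + n')) = χ (tmul S m n) + χ (tmul S m n')
    rw [tmul_add, map_add]
  map_smul' r n := AddMonoidHom.ext fun m => by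
    show χ (tmul S m (r • n)) = χ (tmul S (op r • m) n)
    rw [op_smul_tmul]

theorem injective_rTensorMap_iff {A B : Type u} [AddCommGroup A] [Module S A] [AddCommGroup B]
    [Module S B] (i : A →ₗ[S] B) :
    Function.Injective (rTensorMap S M i) ↔
      ∀ f : A →ₗ[S] CharMod M, ∃ h : B →ₗ[S] CharMod M, h ∘ₗ i = f := by
  constructor
  · intro hi f
    obtain ⟨ψ, hψ⟩ := CharacterModule.dual_surjective_of_injective _ hi (toChar S f)
    exact ⟨ofChar S ψ, LinearMap.ext fun a => AddMonoidHom.ext fun m =>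
      DFunLike.congr_fun hψ (tmul S m a)⟩
  · intro h
    refine (injective_iff_map_eq_zero _).2 fun x hx => ?_
    by_contra hx0
    obtain ⟨χ, hχ⟩ := CharacterModule.exists_character_apply_ne_zero_of_ne_zero hx0
    obtain ⟨g, hg⟩ := h (ofChar S χ)
    have hgχ : (toChar S g).comp (rTensorMap S M i).toAddMonoidHom = χ :=
      addHom_ext S fun m a => by
        rw [AddMonoidHom.comp_apply, LinearMap.toAddMonoidHom_coe, rTensorMap_tmul, toChar_tmul,
          ← LinearMap.comp_apply, hg]
        rfl
    apply hχ
    rw [← hgχ]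
    show toChar S g (rTensorMap S M i x) = 0
    rw [hx, map_zero]

end RTensor

section FinitePresentation

theorem fpMod_quotient_of_fg {T : Type u} [Ring T] {ι : Type u} [Fintype ι]
    (K : Submodule T (ι → T)) (hK : K.FG) : FPMod T ((ι → T) ⧸ K) := by
  let e : (Fin (Fintype.card ι) → T) ≃ₗ[T] (ι → T) :=
    LinearEquiv.funCongrLeft T T (Fintype.equivFin ι)
  have hK' : (K.comap e.toLinearMap).FG := by
    rw [Submodule.comap_equiv_eq_map_symm]
    exact hK.map _
  exact ⟨_, _, hK', ⟨Submodule.Quotient.equiv _ K e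
    (Submodule.map_comap_eq_of_surjective e.surjective K)⟩⟩

theorem comp_mem_span_image_comp {A B ι : Type*} [Ring A] [Ring B] (σ : B ≃+* A)
    {s : Set (ι → B)} {w : ι → B} (hw : w ∈ Submodule.span B s) :
    (fun i => σ (w i)) ∈ Submodule.span A ((fun v i => σ (v i)) '' s) := by
  induction hw using Submodule.span_induction with
  | mem w hw => exact Submodule.subset_span ⟨w, hw, rfl⟩
  | zero => simp only [Pi.zero_apply, map_zero]; exact zero_mem _
  | add x y _ _ hx hy => convert add_mem hx hy using 1; ext; simp
  | smul b x _ hx => convert Submodule.smul_mem _ (σ b) hx using 1; ext; simp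

theorem FPMod.of_ringEquiv {A B : Type u} [Ring A] [Ring B] (σ : A ≃+* B) {F : Type u}
    [AddCommGroup F] [Module A F] [Module B F] (hσ : ∀ (a : A) (x : F), σ a • x = a • x)
    (hF : FPMod B F) : FPMod A F := by
  classical
  obtain ⟨n, K, ⟨s, rfl⟩, ⟨e⟩⟩ := hF
  let ψ : (Fin n → A) →ₗ[A] F :=
    { toFun v := e (Submodule.Quotient.mk fun i => σ (v i))
      map_add' v w := by
        simp only [Pi.add_apply, map_add]
        rw [← map_add, ← Submodule.Quotient.mk_add]
        rfl
      map_smul' a v := by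
        simp only [Pi.smul_apply, smul_eq_mul, map_mul, RingHom.id_apply, ← hσ]
        rw [← map_smul, ← Submodule.Quotient.mk_smul]
        rfl }
  have hψ : Function.Surjective ψ := fun x => by
    obtain ⟨w, hw⟩ := Submodule.mkQ_surjective _ (e.symm x)
    refine ⟨fun i => σ.symm (w i), ?_⟩
    simp only [ψ, LinearMap.coe_mk, AddHom.coe_mk, RingEquiv.apply_symm_apply]
    rw [← Submodule.mkQ_apply, hw, e.apply_symm_apply]
  let unσ : (Fin n → B) → (Fin n → A) := fun w i => σ.symm (w i)
  have hker : LinearMap.ker ψ = Submodule.span A (unσ '' s) := by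
    refine le_antisymm (fun v hv => ?_) (Submodule.span_le.2 ?_)
    · have hv' : (fun i => σ (v i)) ∈ Submodule.span B (s : Set (Fin n → B)) := by
        rwa [LinearMap.mem_ker, LinearMap.coe_mk, AddHom.coe_mk, LinearEquiv.map_eq_zero_iff,
          Submodule.Quotient.mk_eq_zero] at hv
      simpa [unσ] using comp_mem_span_image_comp σ.symm hv'
    · rintro _ ⟨w, hw, rfl⟩
      simpa [ψ, unσ] using Submodule.subset_span hw
  exact ⟨n, _, hker ▸ ⟨s.image unσ, by simp⟩, ⟨ψ.quotKerEquivOfSurjective hψ⟩⟩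

theorem exists_fpMod_factorization {T : Type u} [Ring T] {M : Type u} [AddCommGroup M]
    [Module T M] (E : Finset M) (Q : Finset (M →₀ T))
    (hQ : ∀ q ∈ Q, Finsupp.linearCombination T id q = 0)
    (hQE : ∀ q ∈ Q, q ∈ Finsupp.supported T T (E : Set M)) :
    ∃ (F : Type u) (_ : AddCommGroup F) (_ : Module T F) (π : (M →₀ T) →ₗ[T] F)
      (g : F →ₗ[T] M), FPMod T F ∧ (∀ q ∈ Q, π q = 0) ∧
        ∀ m ∈ E, g (π (Finsupp.single m 1)) = m := by
  classical
  let restrict : (M →₀ T) →ₗ[T] (E → T) :=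
    LinearMap.funLeft T T (Subtype.val : E → M) ∘ₗ Finsupp.lcoeFun
  let γ := Fintype.linearCombination T (Subtype.val : E → M)
  have hγ : ∀ l ∈ Finsupp.supported T T (E : Set M),
      γ (restrict l) = Finsupp.linearCombination T id l := by
    intro l hl
    rw [Finsupp.linearCombination_apply_of_mem_supported T hl, Fintype.linearCombination_apply]
    exact Finset.sum_coe_sort E fun m => l m • m
  let K := Submodule.span T (Q.image restrict : Set (E → T))
  have hK : K ≤ LinearMap.ker γ := by
    refine Submodule.span_le.2 ?_
    simp only [Finset.coe_image, Set.image_subset_iff]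
    exact fun q hq => LinearMap.mem_ker.2 ((hγ q (hQE q hq)).trans (hQ q hq))
  refine ⟨(E → T) ⧸ K, _, _, K.mkQ ∘ₗ restrict, K.liftQ γ hK, fpMod_quotient_of_fg K ⟨_, rfl⟩,
    fun q hq => ?_, fun m hm => ?_⟩
  · exact (Submodule.Quotient.mk_eq_zero K).2
      (Submodule.subset_span (Finset.mem_coe.2 (Finset.mem_image_of_mem _ hq)))
  · show γ (restrict (Finsupp.single m 1)) = m
    rw [hγ _ (Finsupp.single_mem_supported T 1 hm), Finsupp.linearCombination_single, one_smul]
    rfl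

end FinitePresentation

section Approximation

variable {S : Type u} [Ring S] {N K : Type u} [AddCommGroup N] [Module S N] [AddCommGroup K]
  [Module S K]

open RTensor

theorem exists_fpMod_of_rTensorMap_eq_zero (i : N →ₗ[S] K) {M : Type u} [AddCommGroup M]
    [Module Sᵐᵒᵖ M] (x : RTensor S M N) (hx : rTensorMap S M i x = 0) :
    ∃ (F : Type u) (_ : AddCommGroup F) (_ : Module Sᵐᵒᵖ F) (g : F →ₗ[Sᵐᵒᵖ] M)
      (y : RTensor S F N), FPMod Sᵐᵒᵖ F ∧ rTensorMap S F i y = 0 ∧ lTensorMap S g N y = x := by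
  classical
  obtain ⟨s, rfl⟩ := exists_finset S x
  let p := Finsupp.linearCombination Sᵐᵒᵖ (id : M → M)
  let u : RTensor S (M →₀ Sᵐᵒᵖ) N := ∑ a ∈ s, tmul S (Finsupp.single a.1 1) a.2
  have hpu : lTensorMap S p N u = ∑ a ∈ s, tmul S a.1 a.2 := by
    simp only [u, map_sum, lTensorMap_tmul, p, Finsupp.linearCombination_single, one_smul, id_eq]
  obtain ⟨r, hr, hru⟩ := exists_finset_of_lTensorMap_eq_zero S
    (Finsupp.linearCombination_id_surjective Sᵐᵒᵖ M) (rTensorMap S _ i u)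
    (by rw [lTensorMap_rTensorMap, hpu, hx])
  set E := r.biUnion (fun a => a.1.support) ∪ s.image Prod.fst
  have hrE : ∀ q ∈ r.image Prod.fst, q ∈ Finsupp.supported Sᵐᵒᵖ Sᵐᵒᵖ (E : Set M) := by
    simp only [Finset.mem_image, Finsupp.mem_supported]
    rintro _ ⟨a, ha, rfl⟩ m hm
    exact Finset.mem_union_left _ (Finset.mem_biUnion.2 ⟨a, ha, hm⟩)
  obtain ⟨F, _, _, π, g, hF, hπ, hg⟩ := exists_fpMod_factorization E (r.image Prod.fst)
    (by simpa using hr) hrE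
  refine ⟨F, _, _, g, lTensorMap S π N u, hF, ?_, ?_⟩
  · rw [← lTensorMap_rTensorMap, hru, map_sum]
    refine Finset.sum_eq_zero fun a ha => ?_
    rw [lTensorMap_tmul, hπ _ (Finset.mem_image_of_mem _ ha), zero_tmul]
  · simp only [u, map_sum, lTensorMap_tmul]
    refine Finset.sum_congr rfl fun a ha => ?_
    rw [hg _ (Finset.mem_union_right _ (Finset.mem_image_of_mem _ ha))]

theorem injective_rTensorMap_of_forall_fpMod (i : N →ₗ[S] K)
    (h : ∀ (F : Type u) [AddCommGroup F] [Module Sᵐᵒᵖ F], FPMod Sᵐᵒᵖ F →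
      Function.Injective (rTensorMap S F i))
    (M : Type u) [AddCommGroup M] [Module Sᵐᵒᵖ M] : Function.Injective (rTensorMap S M i) := by
  refine (injective_iff_map_eq_zero _).2 fun x hx => ?_
  obtain ⟨F, _, _, g, y, hF, hy, rfl⟩ := exists_fpMod_of_rTensorMap_eq_zero i x hx
  rw [(injective_iff_map_eq_zero _).1 (h F hF) y hy, map_zero]

end Approximation

section Subinjective

variable {S : Type u} [Ring S]

theorem Subinjective.of_retract {N X Y : Type u} [AddCommGroup N] [Module S N] [AddCommGroup X]
    [Module S X] [AddCommGroup Y] [Module S Y] (hX : Subinjective S N X) (s : Y →ₗ[S] X)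
    (r : X →ₗ[S] Y) (hrs : r ∘ₗ s = LinearMap.id) : Subinjective S N Y := by
  intro K _ _ i hi f
  obtain ⟨h, hh⟩ := hX K i hi (s ∘ₗ f)
  exact ⟨r ∘ₗ h, by rw [LinearMap.comp_assoc, hh, ← LinearMap.comp_assoc, hrs, LinearMap.id_comp]⟩

theorem subinjective_of_absPure {N X : Type u} [AddCommGroup N] [Module S N] [AddCommGroup X]
    [Module S X] (hX : PureInjective S X) (hN : AbsPure S N) : Subinjective S N X :=
  fun K _ _ i hi f => hX N K i (hN K i hi) f

theorem absPure_of_forall_subinjective_charMod {N : Type u} [AddCommGroup N] [Module S N]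
    (hN : ∀ (F : Type u) [AddCommGroup F] [Module Sᵐᵒᵖ F], FPMod Sᵐᵒᵖ F →
      Subinjective S N (CharMod F)) : AbsPure S N :=
  fun K _ _ i hi => ⟨hi, injective_rTensorMap_of_forall_fpMod i fun F _ _ hF =>
    (RTensor.injective_rTensorMap_iff S i).2 (hN F hF K i hi)⟩

theorem pureInjective_charMod (M : Type u) [AddCommGroup M] [Module Sᵐᵒᵖ M] :
    PureInjective S (CharMod M) :=
  fun _ _ _ _ _ _ i hi => (RTensor.injective_rTensorMap_iff S i).1 (hi.2 M)

theorem PureInjective.pi {ι : Type u} {X : ι → Type u} [∀ j, AddCommGroup (X j)]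
    [∀ j, Module S (X j)] (h : ∀ j, PureInjective S (X j)) : PureInjective S (∀ j, X j) := by
  intro A B _ _ _ _ i hi f
  choose g hg using fun j => h j A B i hi (LinearMap.proj j ∘ₗ f)
  exact ⟨LinearMap.pi g, LinearMap.ext fun a => funext fun j => DFunLike.congr_fun (hg j) a⟩

end Subinjective

section LeftModules

variable {R : Type u} [Ring R]

theorem pureInjective_charMod_of_module (W : Type u) [AddCommGroup W] [Module R W] :
    PureInjective Rᵐᵒᵖ (CharMod W) :=
  -- for this `Rᵐᵒᵖᵐᵒᵖ`-structure, `CharMod.moduleLeft Rᵐᵒᵖ W` is defeq to `CharMod.moduleRight R W`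
  let _ : Module Rᵐᵒᵖᵐᵒᵖ W := Module.compHom W (RingEquiv.opOp R).symm.toRingHom
  pureInjective_charMod W

def CharMod.congr {X Y : Type u} [AddCommGroup X] [Module Rᵐᵒᵖᵐᵒᵖ X] [AddCommGroup Y]
    [Module R Y] (e : X ≃+ Y) (he : ∀ (r : R) (x : X), e (op (op r) • x) = r • e x) :
    CharMod X ≃ₗ[Rᵐᵒᵖ] CharMod Y where
  toFun φ := φ.comp e.symm.toAddMonoidHom
  invFun ψ := ψ.comp e.toAddMonoidHom
  map_add' _ _ := rfl
  map_smul' r φ := AddMonoidHom.ext fun y => by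
    show φ (op r • e.symm y) = φ (e.symm (unop r • y))
    have key := he (unop r) (e.symm y)
    rw [op_unop, e.apply_symm_apply] at key
    rw [← key, e.symm_apply_apply]
  left_inv φ := by ext; simp
  right_inv ψ := by ext; simp

theorem exists_charMod_equiv_of_fpMod {ι : Type u} (Γ : ι → Type u) [∀ i, AddCommGroup (Γ i)]
    [∀ i, Module R (Γ i)]
    (hcomplete : ∀ (F : Type u) [AddCommGroup F] [Module R F], FPMod R F →
      ∃ i, Nonempty (F ≃ₗ[R] Γ i))
    {F : Type u} [AddCommGroup F] [Module Rᵐᵒᵖᵐᵒᵖ F] (hF : FPMod Rᵐᵒᵖᵐᵒᵖ F) :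
    ∃ i, Nonempty (CharMod F ≃ₗ[Rᵐᵒᵖ] CharMod (Γ i)) := by
  let _ : Module R F := Module.compHom F (RingEquiv.opOp R).toRingHom
  obtain ⟨i, ⟨e⟩⟩ := hcomplete F (hF.of_ringEquiv (RingEquiv.opOp R) fun _ _ => rfl)
  exact ⟨i, ⟨CharMod.congr e.toAddEquiv e.map_smul⟩⟩

theorem absPure_of_subinjective_pi_charMod {ι : Type u} (Γ : ι → Type u)
    [∀ i, AddCommGroup (Γ i)] [∀ i, Module R (Γ i)]
    (hcomplete : ∀ (F : Type u) [AddCommGroup F] [Module R F], FPMod R F →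
      ∃ i, Nonempty (F ≃ₗ[R] Γ i))
    {N : Type u} [AddCommGroup N] [Module Rᵐᵒᵖ N]
    (hN : Subinjective Rᵐᵒᵖ N (∀ i, CharMod (Γ i))) : AbsPure Rᵐᵒᵖ N := by
  classical
  refine absPure_of_forall_subinjective_charMod fun F _ _ hF => ?_
  obtain ⟨i, ⟨e⟩⟩ := exists_charMod_equiv_of_fpMod Γ hcomplete hF
  exact (hN.of_retract _ _ (LinearMap.proj_comp_single_same _ _ i)).of_retract _ _ e.symm_comp

end LeftModules

theorem stmt_3_general {R : Type u} [Ring R] (ι : Type u) (Γ : ι → Type u)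
    [∀ i, AddCommGroup (Γ i)] [∀ i, Module R (Γ i)]
    (hcomplete : ∀ (F : Type u) [AddCommGroup F] [Module R F], FPMod R F →
      ∃ i, Nonempty (F ≃ₗ[R] Γ i)) :
    PiIndigent Rᵐᵒᵖ (∀ i, CharMod (Γ i)) := by
  have hPI : PureInjective Rᵐᵒᵖ (∀ i, CharMod (Γ i)) :=
    PureInjective.pi fun i => pureInjective_charMod_of_module (Γ i)
  exact ⟨hPI, fun N _ _ =>
    ⟨absPure_of_subinjective_pi_charMod Γ hcomplete, subinjective_of_absPure hPI⟩⟩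

theorem stmt_3 {R : Type u} [Ring R] (ι : Type u) (Γ : ι → Type u)
    [∀ i, AddCommGroup (Γ i)] [∀ i, Module R (Γ i)]
    (hfp : ∀ i, FPMod R (Γ i))
    (hirr : ∀ i j, i ≠ j → IsEmpty (Γ i ≃ₗ[R] Γ j))
    (hcomplete : ∀ (F : Type u) [AddCommGroup F] [Module R F], FPMod R F →
      ∃ i, Nonempty (F ≃ₗ[R] Γ i)) :
    PiIndigent Rᵐᵒᵖ (∀ i, CharMod (Γ i)) :=
  stmt_3_general ι Γ hcomplete
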